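/- arXiv:2510.00221 — 4 statements merged into one kernel-verified Lean document; each statement's English description precedes it below -/
import Mathlib

section
/- Discrete Kružkov-type entropy inequality for ρⁿ with geometric weights: assume the weights are geometric, γ_k = γ₀ (1−γ₀)^k with γ₀ ∈ (0,1), and assume the CFL condition λ(M + L) ≤ 1. For c ∈ [0,1] define Ψ_c(ρ, W) = |ρ − c| V(W) − c |V(W) − V(c)|. Then for every c ∈ [0,1], n ∈ ℕ and j ∈ ℤ: |ρ^{n+1}_j − c| − |ρⁿ_j − c| + λ (Ψ_c(ρⁿ_j, Wⁿ_{j+1}) − Ψ_c(ρⁿ_{j−1}, Wⁿ_j)) ≤ 0. -/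
set_option maxHeartbeats 1000000


private lemma Wsummable (γ : ℕ → ℝ) (hγnn : ∀ k, 0 ≤ γ k) (hγsum : HasSum γ 1)
    (f : ℤ → ℝ) (hf : ∀ j, f j ∈ Set.Icc (0:ℝ) 1) (j : ℤ) :
    Summable (fun k : ℕ => γ k * f (j + (k:ℤ))) := by
  refine Summable.of_nonneg_of_le (fun k => mul_nonneg (hγnn k) (hf _).1)
    (fun k => ?_) hγsum.summable
  exact mul_le_of_le_one_right (hγnn k) (hf _).2

private lemma Wbounds (γ : ℕ → ℝ) (hγnn : ∀ k, 0 ≤ γ k) (hγsum : HasSum γ 1)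
    (f : ℤ → ℝ) (hf : ∀ j, f j ∈ Set.Icc (0:ℝ) 1) (j : ℤ) :
    (∑' k : ℕ, γ k * f (j + (k:ℤ))) ∈ Set.Icc (0:ℝ) 1 := by
  constructor
  · exact tsum_nonneg (fun k => mul_nonneg (hγnn k) (hf _).1)
  · have h := Summable.tsum_le_tsum (f := fun k : ℕ => γ k * f (j + (k:ℤ))) (g := γ)
      (fun k => mul_le_of_le_one_right (hγnn k) (hf _).2)
      (Wsummable γ hγnn hγsum f hf j) hγsum.summable
    rwa [hγsum.tsum_eq] at h

private lemma Wrec (γ : ℕ → ℝ) (hγnn : ∀ k, 0 ≤ γ k) (hγsum : HasSum γ 1)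
    (γ0 : ℝ) (hgeom : ∀ k : ℕ, γ k = γ0 * (1 - γ0)^k)
    (f : ℤ → ℝ) (hf : ∀ j, f j ∈ Set.Icc (0:ℝ) 1) (j : ℤ) :
    (∑' k : ℕ, γ k * f (j + (k:ℤ)))
      = γ0 * f j + (1 - γ0) * ∑' k : ℕ, γ k * f ((j+1) + (k:ℤ)) := by
  rw [Summable.tsum_eq_zero_add (Wsummable γ hγnn hγsum f hf j)]
  have h0 : γ 0 * f (j + ((0:ℕ):ℤ)) = γ0 * f j := by
    rw [hgeom 0]; norm_num
  rw [h0]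
  congr 1
  have hc : ∀ k : ℕ, γ (k+1) * f (j + (((k+1:ℕ)):ℤ))
      = (1 - γ0) * (γ k * f ((j+1) + (k:ℤ))) := by
    intro k
    have harg : j + (((k+1:ℕ)):ℤ) = (j+1) + (k:ℤ) := by push_cast; ring
    rw [harg, hgeom (k+1), hgeom k]; ring
  rw [tsum_congr hc, tsum_mul_left]


private lemma step_bounds (lam M L γ0 : ℝ) (hlam : 0 < lam) (hM : 0 ≤ M) (hL : 0 ≤ L)
    (hCFL : lam * (M + L) ≤ 1) (hg0 : 0 < γ0) (hg1 : γ0 < 1)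
    (V : ℝ → ℝ)
    (hVlip : ∀ x y : ℝ, |V x - V y| ≤ L * |x - y|)
    (hVmono : ∀ x ∈ Set.Icc (0:ℝ) 1, ∀ y ∈ Set.Icc (0:ℝ) 1, x ≤ y → V y ≤ V x)
    (hVbd : ∀ ξ ∈ Set.Icc (0:ℝ) 1, V ξ ∈ Set.Icc (0:ℝ) M)
    (a b u w : ℝ) (ha : a ∈ Set.Icc (0:ℝ) 1) (hb : b ∈ Set.Icc (0:ℝ) 1)
    (hu : u ∈ Set.Icc (0:ℝ) 1) (hw : w ∈ Set.Icc (0:ℝ) 1)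
    (huw : u = γ0 * b + (1 - γ0) * w) :
    b + lam * (a * V u - b * V w) ∈ Set.Icc (0:ℝ) 1 := by
  obtain ⟨hvw0, hvwM⟩ := hVbd w hw
  obtain ⟨hvu0, hvuM⟩ := hVbd u hu
  have h0' : (0:ℝ) ≤ 1 - lam * V w := by nlinarith
  constructor
  · nlinarith [mul_nonneg (mul_nonneg hlam.le ha.1) hvu0, mul_nonneg hb.1 h0']
  · rcases le_or_gt b w with hbw | hbw
    · -- u ≤ w
      have hul : u ≤ w := by nlinarith
      have hlip : V u - V w ≤ L * (w - u) := by
        have hl := hVlip u w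
        rw [abs_of_nonpos (by linarith : u - w ≤ 0)] at hl
        linarith [le_abs_self (V u - V w)]
      have hwu : w - u = γ0 * (w - b) := by rw [huw]; ring
      have hkey : a * V u - b * V w ≤ (1 - b) * (M + L) := by
        have h1 : a * V u ≤ V u := by nlinarith [ha.1, ha.2]
        have h2 : γ0 * (w - b) ≤ 1 - b := by nlinarith [hw.2, hb.2]
        nlinarith [mul_nonneg (sub_nonneg.mpr hb.2) hvw0]
      nlinarith [mul_le_mul_of_nonneg_left hkey hlam.le,
        mul_nonneg (sub_nonneg.mpr hb.2) (by linarith : (0:ℝ) ≤ 1 - lam * (M + L))]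
    · -- w < u so V u ≤ V w
      have hul : w ≤ u := by nlinarith
      have hVle : V u ≤ V w := hVmono w hw u hu hul
      have hkey : a * V u - b * V w ≤ (1 - b) * M := by
        nlinarith [mul_le_mul_of_nonneg_left hVle ha.1,
          mul_nonneg (sub_nonneg.mpr ha.2) hvw0,
          mul_le_mul_of_nonneg_left hvwM (sub_nonneg.mpr hb.2)]
      nlinarith [mul_le_mul_of_nonneg_left hkey hlam.le,
        mul_nonneg (sub_nonneg.mpr hb.2) (by nlinarith : (0:ℝ) ≤ 1 - lam * M)]


private lemma key_ineq (lam M L γ0 : ℝ) (hlam : 0 < lam) (hL : 0 ≤ L)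
    (hCFL : lam * (M + L) ≤ 1) (hg0 : 0 < γ0) (hg1 : γ0 < 1)
    (V : ℝ → ℝ)
    (hVlip : ∀ x y : ℝ, |V x - V y| ≤ L * |x - y|)
    (hVmono : ∀ x ∈ Set.Icc (0:ℝ) 1, ∀ y ∈ Set.Icc (0:ℝ) 1, x ≤ y → V y ≤ V x)
    (hVbd : ∀ ξ ∈ Set.Icc (0:ℝ) 1, V ξ ∈ Set.Icc (0:ℝ) M)
    (a b c u w : ℝ) (hc : c ∈ Set.Icc (0:ℝ) 1) (hu : u ∈ Set.Icc (0:ℝ) 1)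
    (hw : w ∈ Set.Icc (0:ℝ) 1) (huw : u = γ0 * b + (1 - γ0) * w) :
    |b + lam * (a * V u - b * V w) - c| ≤
      |b - c| * (1 - lam * V w) + lam * |a - c| * V u
        + lam * c * (|V w - V c| - |V u - V c|) := by
  obtain ⟨hvw0, hvwM⟩ := hVbd w hw
  obtain ⟨hvu0, hvuM⟩ := hVbd u hu
  have h0 : lam * L ≤ 1 - lam * V w := by nlinarith
  have h0' : (0:ℝ) ≤ 1 - lam * V w := by nlinarith
  have hlc : (0:ℝ) ≤ lam * c := mul_nonneg hlam.le hc.1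
  have habs : |V u - V c| - |V w - V c| ≤ |V u - V w| := by
    have h := abs_sub_abs_le_abs_sub (V u - V c) (V w - V c)
    rwa [sub_sub_sub_cancel_right] at h
  have hcg : c * γ0 ≤ 1 := by nlinarith [hc.1, hc.2]
  -- side 1
  have S1 : lam * c * ((V u - V w) + |V u - V c| - |V w - V c|)
      ≤ (|b - c| - (b - c)) * (1 - lam * V w) := by
    have hRHS : 2 * (c - b) * (1 - lam * V w) ≤ (|b - c| - (b - c)) * (1 - lam * V w) := by
      apply mul_le_mul_of_nonneg_right _ h0'
      linarith [neg_abs_le (b - c)]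
    have hRHS0 : (0:ℝ) ≤ (|b - c| - (b - c)) * (1 - lam * V w) :=
      mul_nonneg (by linarith [le_abs_self (b - c)]) h0'
    rcases le_or_gt (V u) (V w) with h | h
    · have hs : (V u - V w) + |V u - V c| - |V w - V c| ≤ 0 := by
        have h2 : |V u - V w| = V w - V u := by rw [abs_of_nonpos (by linarith)]; ring
        linarith
      linarith [mul_nonpos_of_nonneg_of_nonpos hlc hs, hRHS0]
    · have huw2 : u < w := by
        by_contra hcon
        push_neg at hcon
        exact absurd (hVmono w hw u hu hcon) (by linarith)
      have hbw : b < w := by nlinarith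
      rcases le_or_gt (V u) (V c) with h2 | h2
      · have hs : (V u - V w) + |V u - V c| - |V w - V c| ≤ 0 := by
          rw [abs_of_nonpos (by linarith : V u - V c ≤ 0)]
          have h3 : V c - V w ≤ |V w - V c| := by
            rw [abs_sub_comm]; exact le_abs_self _
          linarith
        linarith [mul_nonpos_of_nonneg_of_nonpos hlc hs, hRHS0]
      · have huc : u < c := by
          by_contra hcon
          push_neg at hcon
          exact absurd (hVmono c hc u hu hcon) (by linarith)
        rcases le_or_gt w c with h3 | h3
        · -- b < w ≤ c
          have h4 : V u - V w ≤ L * (γ0 * (w - b)) := by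
            have hl := hVlip u w
            rw [abs_of_neg (by linarith : u - w < 0)] at hl
            have he : -(u - w) = γ0 * (w - b) := by rw [huw]; ring
            rw [he] at hl
            linarith [le_abs_self (V u - V w)]
          have hs : (V u - V w) + |V u - V c| - |V w - V c| ≤ 2 * (V u - V w) := by
            have h5 : |V u - V w| = V u - V w := abs_of_pos (by linarith)
            linarith
          have hkey : lam * c * (V u - V w) ≤ (1 - lam * V w) * (c - b) := by
            have t1 : lam * c * (V u - V w) ≤ lam * c * (L * (γ0 * (w - b))) :=
              mul_le_mul_of_nonneg_left h4 hlc
            have hnn : (0:ℝ) ≤ lam * (L * (w - b)) :=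
              mul_nonneg hlam.le (mul_nonneg hL (by linarith))
            have t2 : lam * (L * (w - b)) * (c * γ0) ≤ lam * (L * (w - b)) * 1 :=
              mul_le_mul_of_nonneg_left hcg hnn
            have t3 : lam * (L * (w - b)) ≤ lam * (L * (c - b)) := by
              apply mul_le_mul_of_nonneg_left _ hlam.le
              exact mul_le_mul_of_nonneg_left (by linarith) hL
            have t4 : lam * L * (c - b) ≤ (1 - lam * V w) * (c - b) :=
              mul_le_mul_of_nonneg_right h0 (by linarith)
            linarith [t1, t2, t3, t4]
          linarith [mul_le_mul_of_nonneg_left hs hlc, hkey, hRHS]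
        · -- c < w, V c ≥ V w, u < c
          have h6 : V w ≤ V c := hVmono c hc w hw h3.le
          have hA : |V u - V c| = V u - V c := abs_of_pos (by linarith)
          have hB : |V w - V c| = V c - V w := by
            rw [abs_of_nonpos (by linarith)]; ring
          have h7 : V u - V c ≤ L * (c - u) := by
            have hl := hVlip u c
            rw [abs_of_neg (by linarith : u - c < 0)] at hl
            linarith [le_abs_self (V u - V c)]
          have hcu : c - u ≤ γ0 * (c - b) := by
            have he : c - u = γ0 * (c - b) + (1 - γ0) * (c - w) := by rw [huw]; ring
            nlinarith [mul_nonneg (by linarith : (0:ℝ) ≤ 1 - γ0) (by linarith : (0:ℝ) ≤ w - c)]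
          have hcb : (0:ℝ) < c - b := by
            by_contra hcon
            push_neg at hcon
            linarith [mul_nonpos_of_nonneg_of_nonpos hg0.le (by linarith : c - b ≤ 0)]
          have hkey : lam * c * (V u - V c) ≤ (1 - lam * V w) * (c - b) := by
            have t1 : lam * c * (V u - V c) ≤ lam * c * (L * (c - u)) :=
              mul_le_mul_of_nonneg_left h7 hlc
            have t1' : lam * c * (L * (c - u)) ≤ lam * c * (L * (γ0 * (c - b))) := by
              apply mul_le_mul_of_nonneg_left _ hlc
              exact mul_le_mul_of_nonneg_left hcu hL
            have hnn : (0:ℝ) ≤ lam * (L * (c - b)) :=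
              mul_nonneg hlam.le (mul_nonneg hL hcb.le)
            have t2 : lam * (L * (c - b)) * (c * γ0) ≤ lam * (L * (c - b)) * 1 :=
              mul_le_mul_of_nonneg_left hcg hnn
            have t4 : lam * L * (c - b) ≤ (1 - lam * V w) * (c - b) :=
              mul_le_mul_of_nonneg_right h0 hcb.le
            linarith [t1, t1', t2, t4]
          rw [hA, hB]
          linarith [hkey, hRHS]
  -- side 2
  have S2 : lam * c * ((V w - V u) + |V u - V c| - |V w - V c|)
      ≤ (|b - c| + (b - c)) * (1 - lam * V w) := by
    have hRHS : 2 * (b - c) * (1 - lam * V w) ≤ (|b - c| + (b - c)) * (1 - lam * V w) := by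
      apply mul_le_mul_of_nonneg_right _ h0'
      linarith [le_abs_self (b - c)]
    have hRHS0 : (0:ℝ) ≤ (|b - c| + (b - c)) * (1 - lam * V w) :=
      mul_nonneg (by linarith [neg_abs_le (b - c)]) h0'
    rcases le_or_gt (V w) (V u) with h | h
    · have hs : (V w - V u) + |V u - V c| - |V w - V c| ≤ 0 := by
        have h2 : |V u - V w| = V u - V w := abs_of_nonneg (by linarith)
        linarith
      linarith [mul_nonpos_of_nonneg_of_nonpos hlc hs, hRHS0]
    · have huw2 : w < u := by
        by_contra hcon
        push_neg at hcon
        exact absurd (hVmono u hu w hw hcon) (by linarith)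
      have hbw : w < b := by nlinarith
      rcases le_or_gt (V c) (V u) with h2 | h2
      · have hs : (V w - V u) + |V u - V c| - |V w - V c| ≤ 0 := by
          rw [abs_of_nonneg (by linarith : (0:ℝ) ≤ V u - V c)]
          have h3 : V w - V c ≤ |V w - V c| := le_abs_self _
          linarith
        linarith [mul_nonpos_of_nonneg_of_nonpos hlc hs, hRHS0]
      · have huc : c < u := by
          by_contra hcon
          push_neg at hcon
          exact absurd (hVmono u hu c hc hcon) (by linarith)
        rcases le_or_gt c w with h3 | h3
        · -- c ≤ w < b
          have h4 : V w - V u ≤ L * (γ0 * (b - w)) := by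
            have hl := hVlip u w
            rw [abs_of_pos (by linarith : (0:ℝ) < u - w)] at hl
            have he : u - w = γ0 * (b - w) := by rw [huw]; ring
            rw [he] at hl
            have h5 : V w - V u ≤ |V u - V w| := by
              rw [abs_sub_comm]; exact le_abs_self _
            linarith
          have hs : (V w - V u) + |V u - V c| - |V w - V c| ≤ 2 * (V w - V u) := by
            have h5 : |V u - V w| = -(V u - V w) := abs_of_neg (by linarith)
            linarith
          have hkey : lam * c * (V w - V u) ≤ (1 - lam * V w) * (b - c) := by
            have t1 : lam * c * (V w - V u) ≤ lam * c * (L * (γ0 * (b - w))) :=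
              mul_le_mul_of_nonneg_left h4 hlc
            have hnn : (0:ℝ) ≤ lam * (L * (b - w)) :=
              mul_nonneg hlam.le (mul_nonneg hL (by linarith))
            have t2 : lam * (L * (b - w)) * (c * γ0) ≤ lam * (L * (b - w)) * 1 :=
              mul_le_mul_of_nonneg_left hcg hnn
            have t3 : lam * (L * (b - w)) ≤ lam * (L * (b - c)) := by
              apply mul_le_mul_of_nonneg_left _ hlam.le
              exact mul_le_mul_of_nonneg_left (by linarith) hL
            have t4 : lam * L * (b - c) ≤ (1 - lam * V w) * (b - c) :=
              mul_le_mul_of_nonneg_right h0 (by linarith)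
            linarith [t1, t2, t3, t4]
          linarith [mul_le_mul_of_nonneg_left hs hlc, hkey, hRHS]
        · -- w < c < u
          have h6 : V c ≤ V w := hVmono w hw c hc h3.le
          have hA : |V u - V c| = -(V u - V c) := abs_of_neg (by linarith)
          have hB : |V w - V c| = V w - V c := abs_of_nonneg (by linarith)
          have h7 : V c - V u ≤ L * (u - c) := by
            have hl := hVlip u c
            rw [abs_of_pos (by linarith : (0:ℝ) < u - c)] at hl
            have h5 : V c - V u ≤ |V u - V c| := by
              rw [abs_sub_comm]; exact le_abs_self _
            linarith
          have hcu : u - c ≤ γ0 * (b - c) := by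
            have he : u - c = γ0 * (b - c) + (1 - γ0) * (w - c) := by rw [huw]; ring
            nlinarith [mul_nonneg (by linarith : (0:ℝ) ≤ 1 - γ0) (by linarith : (0:ℝ) ≤ c - w)]
          have hcb : (0:ℝ) < b - c := by
            by_contra hcon
            push_neg at hcon
            linarith [mul_nonpos_of_nonneg_of_nonpos hg0.le (by linarith : b - c ≤ 0)]
          have hkey : lam * c * (V c - V u) ≤ (1 - lam * V w) * (b - c) := by
            have t1 : lam * c * (V c - V u) ≤ lam * c * (L * (u - c)) :=
              mul_le_mul_of_nonneg_left h7 hlc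
            have t1' : lam * c * (L * (u - c)) ≤ lam * c * (L * (γ0 * (b - c))) := by
              apply mul_le_mul_of_nonneg_left _ hlc
              exact mul_le_mul_of_nonneg_left hcu hL
            have hnn : (0:ℝ) ≤ lam * (L * (b - c)) :=
              mul_nonneg hlam.le (mul_nonneg hL hcb.le)
            have t2 : lam * (L * (b - c)) * (c * γ0) ≤ lam * (L * (b - c)) * 1 :=
              mul_le_mul_of_nonneg_left hcg hnn
            have t4 : lam * L * (b - c) ≤ (1 - lam * V w) * (b - c) :=
              mul_le_mul_of_nonneg_right h0 hcb.le
            linarith [t1, t1', t2, t4]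
          rw [hA, hB]
          linarith [hkey, hRHS]
  have hA1 : (0:ℝ) ≤ lam * (|a - c| - (a - c)) * V u :=
    mul_nonneg (mul_nonneg hlam.le (by linarith [le_abs_self (a - c)])) hvu0
  have hA2 : (0:ℝ) ≤ lam * (|a - c| + (a - c)) * V u :=
    mul_nonneg (mul_nonneg hlam.le (by linarith [neg_abs_le (a - c)])) hvu0
  rw [abs_le]
  constructor
  · linarith [S2, hA2]
  · linarith [S1, hA1]


set_option maxHeartbeats 1000000 in
/-- Discrete Kružkov-type entropy inequality for `ρⁿ` with geometric weights:
with `Ψ_c(ρ, W) = |ρ − c| V(W) − c |V(W) − V(c)|`, under the CFL condition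
`λ (M + L) ≤ 1`, one has
`|ρ^{n+1}_j − c| − |ρⁿ_j − c| + λ (Ψ_c(ρⁿ_j, Wⁿ_{j+1}) − Ψ_c(ρⁿ_{j−1}, Wⁿ_j)) ≤ 0`. -/
theorem godunov_rho_discrete_entropy_inequality_geometric
    (lam M L : ℝ) (hlam : 0 < lam) (hM : 0 ≤ M) (hL : 0 ≤ L)
    (V : ℝ → ℝ)
    (hVlip : ∀ x y : ℝ, |V x - V y| ≤ L * |x - y|)
    (hVmono : ∀ x ∈ Set.Icc (0:ℝ) 1, ∀ y ∈ Set.Icc (0:ℝ) 1, x ≤ y → V y ≤ V x)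
    (hVbd : ∀ ξ ∈ Set.Icc (0:ℝ) 1, V ξ ∈ Set.Icc (0:ℝ) M)
    (γ : ℕ → ℝ)
    (hγnn : ∀ k, 0 ≤ γ k) (hγmono : ∀ k, γ (k+1) ≤ γ k)
    (hγsum : HasSum γ 1)
    (ρ0 : ℤ → ℝ) (hρ0 : ∀ j, ρ0 j ∈ Set.Icc (0:ℝ) 1)
    (ρ W : ℕ → ℤ → ℝ)
    (hinit : ∀ j : ℤ, ρ 0 j = ρ0 j)
    (hW : ∀ (n : ℕ) (j : ℤ), W n j = ∑' k : ℕ, γ k * ρ n (j + (k:ℤ)))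
    (hupd : ∀ (n : ℕ) (j : ℤ),
      ρ (n+1) j = ρ n j + lam * (ρ n (j-1) * V (W n j) - ρ n j * V (W n (j+1))))
    (hCFL : lam * (M + L) ≤ 1)
    (γ0 : ℝ) (hγ0 : γ0 ∈ Set.Ioo (0:ℝ) 1)
    (hgeom : ∀ k : ℕ, γ k = γ0 * (1 - γ0)^k)
    (Ψ : ℝ → ℝ → ℝ → ℝ)
    (hΨ : ∀ c r w : ℝ, Ψ c r w = |r - c| * V w - c * |V w - V c|) :
    ∀ c ∈ Set.Icc (0:ℝ) 1, ∀ (n : ℕ) (j : ℤ),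
      |ρ (n+1) j - c| - |ρ n j - c| +
        lam * (Ψ c (ρ n j) (W n (j+1)) - Ψ c (ρ n (j-1)) (W n j)) ≤ 0 := by
  intro c hc n j
  have hbb : ∀ m : ℕ, ∀ i : ℤ, ρ m i ∈ Set.Icc (0:ℝ) 1 := by
    intro m
    induction m with
    | zero => intro i; rw [hinit]; exact hρ0 i
    | succ m ih =>
      intro i
      have hWb : ∀ i' : ℤ, W m i' ∈ Set.Icc (0:ℝ) 1 := by
        intro i'; rw [hW]
        exact Wbounds γ hγnn hγsum (ρ m) ih i'
      have hrec : W m i = γ0 * ρ m i + (1 - γ0) * W m (i+1) := by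
        rw [hW, hW]
        exact Wrec γ hγnn hγsum γ0 hgeom (ρ m) ih i
      rw [hupd]
      exact step_bounds lam M L γ0 hlam hM hL hCFL hγ0.1 hγ0.2 V hVlip hVmono hVbd
        (ρ m (i-1)) (ρ m i) (W m i) (W m (i+1)) (ih (i-1)) (ih i) (hWb i) (hWb (i+1)) hrec
  have hWb : ∀ i' : ℤ, W n i' ∈ Set.Icc (0:ℝ) 1 := by
    intro i'; rw [hW]
    exact Wbounds γ hγnn hγsum (ρ n) (hbb n) i'
  have hrec : W n j = γ0 * ρ n j + (1 - γ0) * W n (j+1) := by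
    rw [hW, hW]
    exact Wrec γ hγnn hγsum γ0 hgeom (ρ n) (hbb n) j
  have hk := key_ineq lam M L γ0 hlam hL hCFL hγ0.1 hγ0.2 V hVlip hVmono hVbd
    (ρ n (j-1)) (ρ n j) c (W n j) (W n (j+1)) hc (hWb j) (hWb (j+1)) hrec
  rw [hupd, hΨ, hΨ]
  linarith [hk]
end

section
/- Nonnegativity of the relative entropy correction H_η: let V : ℝ → ℝ be continuous and nonincreasing, and let η : ℝ → ℝ be twice continuously differentiable with η'' ≥ 0 (convex). For a, b ∈ ℝ define H_η(a | b) = ∫_a^b η''(s) V(s) ds − V(b) (η'(b) − η'(a)) (interval integral, with the usual sign convention when b < a). Then H_η(a | b) ≥ 0 for all a, b ∈ ℝ. -/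
/-!
Since `∫_a^b η'' = η'(b) - η'(a)`, the correction is `∫_a^b η''(s) (V(s) - V(b)) ds`. For `a ≤ b`
the integrand is nonnegative on `[a, b]` because `V` is nonincreasing; for `b < a` it is
nonpositive on `[b, a]`, and the reversed orientation of the interval restores the sign.
-/

open intervalIntegral

theorem intervalIntegral.integral_mul_sub_nonneg_of_antitone {w V : ℝ → ℝ}
    (hw : ∀ s, 0 ≤ w s) (hV : Antitone V) (a b : ℝ) :
    0 ≤ ∫ s in a..b, w s * (V s - V b) := by
  rcases le_total a b with hab | hba
  · exact integral_nonneg hab fun s hs => mul_nonneg (hw s) (sub_nonneg.2 (hV hs.2))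
  · have hneg : 0 ≤ ∫ s in b..a, -(w s * (V s - V b)) :=
      integral_nonneg hba fun s hs =>
        neg_nonneg.2 (mul_nonpos_of_nonneg_of_nonpos (hw s) (sub_nonpos.2 (hV hs.1)))
    rwa [integral_neg, ← integral_symm] at hneg

theorem intervalIntegral.integral_deriv_mul_sub_eq {f g : ℝ → ℝ} (hf : ContDiff ℝ 1 f)
    (hg : Continuous g) (a b : ℝ) :
    (∫ s in a..b, deriv f s * g s) - g b * (f b - f a) =
      ∫ s in a..b, deriv f s * (g s - g b) := by
  have hf' : Continuous (deriv f) := hf.continuous_deriv le_rfl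
  have hftc : ∫ s in a..b, deriv f s = f b - f a :=
    integral_deriv_eq_sub (fun x _ => (hf.differentiable one_ne_zero).differentiableAt)
      (hf'.intervalIntegrable a b)
  simp only [mul_sub]
  rw [integral_sub (f := fun s => deriv f s * g s) (g := fun s => deriv f s * g b)
    ((hf'.mul hg).intervalIntegrable a b) ((hf'.mul continuous_const).intervalIntegrable a b),
    integral_mul_const, hftc]
  ring

/-- Nonnegativity of the relative entropy correction `H_η`: for a continuous
nonincreasing `V` and a `C²` convex entropy `η`,
`H_η(a | b) = ∫_a^b η''(s) V(s) ds − V(b)(η'(b) − η'(a)) ≥ 0`. -/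
theorem relative_entropy_correction_nonneg
    (V η : ℝ → ℝ) (hVcont : Continuous V) (hVmono : Antitone V)
    (hη : ContDiff ℝ 2 η) (hconvex : ∀ s : ℝ, 0 ≤ deriv (deriv η) s) :
    ∀ a b : ℝ,
      0 ≤ (∫ s in a..b, deriv (deriv η) s * V s) - V b * (deriv η b - deriv η a) := by
  intro a b
  rw [integral_deriv_mul_sub_eq (hη.deriv' : ContDiff ℝ 1 (deriv η)) hVcont]
  exact integral_mul_sub_nonneg_of_antitone hconvex hVmono a b
end

section
/- Deviation of a sequence from its weighted averages in terms of discrete total variation: let (γ_k)_{k∈ℕ} be nonnegative reals with ∑_{k=0}^∞ γ_k = 1, let ρ : ℤ → ℝ with 0 ≤ ρ_j ≤ 1 for all j, and set W_j = ∑_{k=0}^∞ γ_k ρ_{j+k}. Then ∑_{j∈ℤ} |W_j − ρ_j| ≤ (∑_{k=0}^∞ k γ_k) · ∑_{j∈ℤ} |ρ_{j+1} − ρ_j|, where the sums of nonnegative terms are valued in [0,∞]. -/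
open scoped ENNReal

/-!
Since the weights sum to one, `W j - ρ j = ∑ₖ γₖ (ρ (j + k) - ρ j)`. By the triangle
inequality along `j, j + 1, …, j + k`, and since summing over `j ∈ ℤ` is shift invariant,
`∑ⱼ |ρ (j + k) - ρ j|` is at most `k` times the total variation of `ρ`; exchanging the sums
over `j` and `k` (all terms are in `[0, ∞]`) gives the factor `∑ₖ k γₖ`.
-/

theorem tsum_edist_add_natCast_le {α : Type*} [PseudoEMetricSpace α] (ρ : ℤ → α) (k : ℕ) :
    ∑' j : ℤ, edist (ρ (j + k)) (ρ j) ≤ k * ∑' j : ℤ, edist (ρ (j + 1)) (ρ j) := by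
  have telescope (j : ℤ) :
      edist (ρ (j + k)) (ρ j) ≤ ∑ i ∈ Finset.range k, edist (ρ (j + i + 1)) (ρ (j + i)) := by
    rw [edist_comm]
    simpa [edist_comm, add_assoc] using edist_le_range_sum_edist (fun i : ℕ => ρ (j + i)) k
  calc ∑' j : ℤ, edist (ρ (j + k)) (ρ j)
      ≤ ∑' j : ℤ, ∑ i ∈ Finset.range k, edist (ρ (j + i + 1)) (ρ (j + i)) :=
        ENNReal.tsum_le_tsum telescope
    _ = ∑ i ∈ Finset.range k, ∑' j : ℤ, edist (ρ (j + i + 1)) (ρ (j + i)) :=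
        Summable.tsum_finsetSum fun _ _ => ENNReal.summable
    _ = k * ∑' j : ℤ, edist (ρ (j + 1)) (ρ j) := by
        have shift (i : ℕ) : ∑' j : ℤ, edist (ρ (j + i + 1)) (ρ (j + i)) =
            ∑' j : ℤ, edist (ρ (j + 1)) (ρ j) :=
          (Equiv.addRight (i : ℤ)).tsum_eq fun j => edist (ρ (j + 1)) (ρ j)
        simp only [shift, Finset.sum_const, Finset.card_range, nsmul_eq_mul]

theorem tsum_mul_sub_eq_of_hasSum_one {ι : Type*} {γ a : ι → ℝ} (hγ : HasSum γ 1)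
    (ha : Summable fun k => γ k * a k) (c : ℝ) :
    ∑' k, γ k * a k - c = ∑' k, γ k * (a k - c) := by
  simpa [mul_sub] using ((ha.hasSum.sub (hγ.mul_right c)).tsum_eq).symm

theorem ofReal_abs_tsum_mul_sub_le {ι : Type*} {γ a : ι → ℝ} (hγnn : ∀ k, 0 ≤ γ k)
    (hγ : HasSum γ 1) (ha : Summable fun k => γ k * a k) (c : ℝ) :
    ENNReal.ofReal |∑' k, γ k * a k - c| ≤ ∑' k, ENNReal.ofReal (γ k) * edist (a k) c := by
  rw [← Real.enorm_eq_ofReal_abs, tsum_mul_sub_eq_of_hasSum_one hγ ha]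
  refine enorm_tsum_le_tsum_enorm.trans_eq (tsum_congr fun k => ?_)
  rw [enorm_mul, edist_eq_enorm_sub, Real.enorm_of_nonneg (hγnn k)]

/-- Deviation of a sequence from its weighted averages in terms of the discrete
total variation:
`∑_j |W_j − ρ_j| ≤ (∑_k k γ_k) · ∑_j |ρ_{j+1} − ρ_j|` (sums in `[0,∞]`). -/
theorem deviation_from_weighted_averages
    (γ : ℕ → ℝ) (hγnn : ∀ k, 0 ≤ γ k) (hγsum : HasSum γ 1)
    (ρ : ℤ → ℝ) (hρ : ∀ j, ρ j ∈ Set.Icc (0:ℝ) 1)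
    (W : ℤ → ℝ) (hW : ∀ j : ℤ, W j = ∑' k : ℕ, γ k * ρ (j + (k:ℤ))) :
    ∑' j : ℤ, ENNReal.ofReal |W j - ρ j| ≤
      (∑' k : ℕ, ENNReal.ofReal ((k:ℝ) * γ k)) *
        ∑' j : ℤ, ENNReal.ofReal |ρ (j+1) - ρ j| := by
  have summable (j : ℤ) : Summable fun k : ℕ => γ k * ρ (j + k) :=
    hγsum.summable.of_nonneg_of_le (fun k => mul_nonneg (hγnn k) (hρ _).1)
      fun k => mul_le_of_le_one_right (hγnn k) (hρ _).2
  calc ∑' j : ℤ, ENNReal.ofReal |W j - ρ j|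
      ≤ ∑' j : ℤ, ∑' k : ℕ, ENNReal.ofReal (γ k) * edist (ρ (j + k)) (ρ j) :=
        ENNReal.tsum_le_tsum fun j =>
          hW j ▸ ofReal_abs_tsum_mul_sub_le hγnn hγsum (summable j) (ρ j)
    _ = ∑' k : ℕ, ENNReal.ofReal (γ k) * ∑' j : ℤ, edist (ρ (j + k)) (ρ j) := by
        rw [ENNReal.tsum_comm]
        simp only [ENNReal.tsum_mul_left]
    _ ≤ ∑' k : ℕ, ENNReal.ofReal (γ k) * (k * ∑' j : ℤ, edist (ρ (j + 1)) (ρ j)) := by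
        gcongr with k
        exact tsum_edist_add_natCast_le ρ k
    _ = (∑' k : ℕ, ENNReal.ofReal ((k:ℝ) * γ k)) *
        ∑' j : ℤ, ENNReal.ofReal |ρ (j+1) - ρ j| := by
        simp only [edist_eq_enorm_sub, Real.enorm_eq_ofReal_abs, ← ENNReal.tsum_mul_right,
          ENNReal.ofReal_mul (Nat.cast_nonneg _), ENNReal.ofReal_natCast, mul_assoc, mul_left_comm]
end

section
/- Compatibility of the numerical entropy flux with the Kružkov entropy flux: assume the CFL condition λ(M + L) ≤ 1. For c ∈ [0,1] define ψ_c(ξ) = |ξ − c| V(c) − |V(ξ) − V(c)| ξ and, for n ∈ ℕ and j ∈ ℤ, Ψⁿ_{j−1/2} = |Wⁿ_{j−1} − c| V(c) − ∑_{k=0}^∞ γ_k ρⁿ_{j+k−1} |V(Wⁿ_{j+k}) − V(c)|. Then for every c ∈ [0,1], n ∈ ℕ and j ∈ ℤ: |Ψⁿ_{j−1/2} − ψ_c(Wⁿ_j)| ≤ 2M |Wⁿ_j − Wⁿ_{j−1}| + L ∑_{k=0}^∞ γ_k |Wⁿ_{j+k} − Wⁿ_j|. -/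
set_option maxHeartbeats 2000000 in
/-- Compatibility of the numerical entropy flux with the Kružkov entropy flux:
with `ψ_c(ξ) = |ξ − c| V(c) − |V(ξ) − V(c)| ξ` and
`Ψⁿ_{j−1/2} = |Wⁿ_{j−1} − c| V(c) − ∑ₖ γₖ ρⁿ_{j+k−1} |V(Wⁿ_{j+k}) − V(c)|`,
one has `|Ψⁿ_{j−1/2} − ψ_c(Wⁿ_j)| ≤ 2M |Wⁿ_j − Wⁿ_{j−1}| + L ∑ₖ γₖ |Wⁿ_{j+k} − Wⁿ_j|`. -/
theorem numerical_entropy_flux_compatibility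
    (lam M L : ℝ) (hlam : 0 < lam) (hM : 0 ≤ M) (hL : 0 ≤ L)
    (V : ℝ → ℝ)
    (hVlip : ∀ x y : ℝ, |V x - V y| ≤ L * |x - y|)
    (hVmono : ∀ x ∈ Set.Icc (0:ℝ) 1, ∀ y ∈ Set.Icc (0:ℝ) 1, x ≤ y → V y ≤ V x)
    (hVbd : ∀ ξ ∈ Set.Icc (0:ℝ) 1, V ξ ∈ Set.Icc (0:ℝ) M)
    (γ : ℕ → ℝ)
    (hγnn : ∀ k, 0 ≤ γ k) (hγmono : ∀ k, γ (k+1) ≤ γ k)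
    (hγsum : HasSum γ 1)
    (ρ0 : ℤ → ℝ) (hρ0 : ∀ j, ρ0 j ∈ Set.Icc (0:ℝ) 1)
    (ρ W : ℕ → ℤ → ℝ)
    (hinit : ∀ j : ℤ, ρ 0 j = ρ0 j)
    (hW : ∀ (n : ℕ) (j : ℤ), W n j = ∑' k : ℕ, γ k * ρ n (j + (k:ℤ)))
    (hupd : ∀ (n : ℕ) (j : ℤ),
      ρ (n+1) j = ρ n j + lam * (ρ n (j-1) * V (W n j) - ρ n j * V (W n (j+1))))
    (hCFL : lam * (M + L) ≤ 1)
    (ψ : ℝ → ℝ → ℝ)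
    (hψ : ∀ c ξ : ℝ, ψ c ξ = |ξ - c| * V c - |V ξ - V c| * ξ)
    (Ψ : ℝ → ℕ → ℤ → ℝ)
    (hΨ : ∀ (c : ℝ) (n : ℕ) (j : ℤ),
      Ψ c n j = |W n (j-1) - c| * V c -
        ∑' k : ℕ, γ k * ρ n (j + (k:ℤ) - 1) * |V (W n (j + (k:ℤ))) - V c|) :
    ∀ c ∈ Set.Icc (0:ℝ) 1, ∀ (n : ℕ) (j : ℤ),
      |Ψ c n j - ψ c (W n j)| ≤
        2 * M * |W n j - W n (j-1)| + L * ∑' k : ℕ, γ k * |W n (j + (k:ℤ)) - W n j| := by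
  have hsγ : Summable γ := hγsum.summable
  have hγ0le1 : γ 0 ≤ 1 := by
    have h := Summable.le_tsum hsγ 0 (fun k _ => hγnn k)
    rwa [hγsum.tsum_eq] at h
  -- invariance of [0,1]
  have hρmem : ∀ n j, ρ n j ∈ Set.Icc (0:ℝ) 1 := by
    intro n
    induction n with
    | zero => intro j; rw [hinit]; exact hρ0 j
    | succ n ih =>
      have hsum : ∀ j : ℤ, Summable (fun k : ℕ => γ k * ρ n (j + (k:ℤ))) :=
        fun j => Summable.of_nonneg_of_le (fun k => mul_nonneg (hγnn k) (ih _).1)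
          (fun k => mul_le_of_le_one_right (hγnn k) (ih _).2) hsγ
      have hWmem : ∀ j : ℤ, W n j ∈ Set.Icc (0:ℝ) 1 := by
        intro j
        rw [hW]
        refine ⟨tsum_nonneg (fun k => mul_nonneg (hγnn k) (ih _).1), ?_⟩
        calc ∑' k : ℕ, γ k * ρ n (j + (k:ℤ)) ≤ ∑' k : ℕ, γ k :=
              Summable.tsum_le_tsum (fun k => mul_le_of_le_one_right (hγnn k) (ih _).2) (hsum j) hsγ
          _ = 1 := hγsum.tsum_eq
      intro j
      have hVj := hVbd _ (hWmem j)
      have hVj1 := hVbd _ (hWmem (j+1))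
      have hρj := ih j
      have hρj1 := ih (j-1)
      constructor
      · rw [hupd]
        have h1 : 0 ≤ 1 - lam * V (W n (j+1)) := by nlinarith [hVj1.1, hVj1.2, hlam.le]
        nlinarith [mul_nonneg hρj.1 h1, mul_nonneg (mul_nonneg hlam.le hρj1.1) hVj.1]
      · -- upper bound; first, W n (j+1) - W n j ≤ γ 0 * (1 - ρ n j)
        have hsum1 : Summable (fun k : ℕ => γ (k+1) * ρ n ((j+1) + (k:ℤ))) :=
          Summable.of_nonneg_of_le (fun k => mul_nonneg (hγnn _) (ih _).1)
            (fun k => (mul_le_of_le_one_right (hγnn _) (ih _).2).trans (hγmono k))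
            hsγ
        have hWj_split : W n j = γ 0 * ρ n j + ∑' k : ℕ, γ (k+1) * ρ n ((j+1) + (k:ℤ)) := by
          rw [hW, Summable.tsum_eq_zero_add (hsum j)]
          simp only [Nat.cast_zero, add_zero]
          congr 1
          refine tsum_congr fun k => ?_
          rw [show j + ((k+1 : ℕ) : ℤ) = (j+1) + (k:ℤ) by push_cast; ring]
        have hτ1 : HasSum (fun k : ℕ => γ (k+1)) (1 - γ 0) := by
          rw [hasSum_nat_add_iff 1]; simpa using hγsum
        have hτ : HasSum (fun k : ℕ => γ k - γ (k+1)) (γ 0) := by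
          simpa using hγsum.sub hτ1
        have hτs : Summable (fun k : ℕ => (γ k - γ (k+1)) * ρ n ((j+1) + (k:ℤ))) := by
          refine Summable.congr ((hsum (j+1)).sub hsum1) fun k => by ring
        have e2 : ∑' k : ℕ, (γ k - γ (k+1)) * ρ n ((j+1) + (k:ℤ))
            = (∑' k : ℕ, γ k * ρ n ((j+1) + (k:ℤ)))
              - ∑' k : ℕ, γ (k+1) * ρ n ((j+1) + (k:ℤ)) := by
          rw [← Summable.tsum_sub (hsum (j+1)) hsum1]
          exact tsum_congr fun k => by ring
        have hb : (∑' k : ℕ, (γ k - γ (k+1)) * ρ n ((j+1) + (k:ℤ))) ≤ γ 0 := by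
          calc (∑' k : ℕ, (γ k - γ (k+1)) * ρ n ((j+1) + (k:ℤ)))
              ≤ ∑' k : ℕ, (γ k - γ (k+1)) :=
                Summable.tsum_le_tsum (fun k => mul_le_of_le_one_right
                  (sub_nonneg.mpr (hγmono k)) (ih _).2) hτs hτ.summable
            _ = γ 0 := hτ.tsum_eq
        have hdiff : W n (j+1) - W n j ≤ γ 0 * (1 - ρ n j) := by
          have e1 : W n (j+1) - W n j
              = (∑' k : ℕ, (γ k - γ (k+1)) * ρ n ((j+1) + (k:ℤ))) - γ 0 * ρ n j := by
            rw [hW n (j+1), hWj_split, e2]; ring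
          nlinarith [hb]
        have hVdiff : V (W n j) - V (W n (j+1)) ≤ L * (1 - ρ n j) := by
          rcases le_or_gt (W n j) (W n (j+1)) with h | h
          · have h2 := (le_abs_self _).trans (hVlip (W n j) (W n (j+1)))
            rw [abs_sub_comm, abs_of_nonneg (by linarith)] at h2
            nlinarith [hγnn 0, hρj.2, mul_le_mul_of_nonneg_left hdiff hL,
              mul_nonneg (mul_nonneg (sub_nonneg.mpr hγ0le1) hL) (sub_nonneg.mpr hρj.2)]
          · have h3 := hVmono _ (hWmem (j+1)) _ (hWmem j) h.le
            nlinarith [hρj.2]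
        rw [hupd]
        have key : ρ n (j-1) * V (W n j) - ρ n j * V (W n (j+1)) ≤ (M + L) * (1 - ρ n j) := by
          have h1 : ρ n (j-1) * V (W n j) ≤ V (W n j) := mul_le_of_le_one_left hVj.1 hρj1.2
          nlinarith [hVdiff, mul_le_mul_of_nonneg_left hVj1.2 (sub_nonneg.mpr hρj.2),
            mul_nonneg (sub_nonneg.mpr hρj.2) hVj1.1]
        nlinarith [mul_le_mul_of_nonneg_left key hlam.le,
          mul_le_mul_of_nonneg_right hCFL (sub_nonneg.mpr hρj.2)]
  -- consequences
  have hsum : ∀ n (j : ℤ), Summable (fun k : ℕ => γ k * ρ n (j + (k:ℤ))) :=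
    fun n j => Summable.of_nonneg_of_le (fun k => mul_nonneg (hγnn k) (hρmem n _).1)
      (fun k => mul_le_of_le_one_right (hγnn k) (hρmem n _).2) hsγ
  have hWmem : ∀ n (j : ℤ), W n j ∈ Set.Icc (0:ℝ) 1 := by
    intro n j
    rw [hW]
    refine ⟨tsum_nonneg (fun k => mul_nonneg (hγnn k) (hρmem n _).1), ?_⟩
    calc ∑' k : ℕ, γ k * ρ n (j + (k:ℤ)) ≤ ∑' k : ℕ, γ k :=
          Summable.tsum_le_tsum (fun k => mul_le_of_le_one_right (hγnn k) (hρmem n _).2) (hsum n j) hsγ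
      _ = 1 := hγsum.tsum_eq
  intro c hc n j
  have hVc := hVbd c hc
  set A : ℝ := |V (W n j) - V c| with hAdef
  have hA0 : 0 ≤ A := abs_nonneg _
  have hAM : A ≤ M := by
    have h1 := hVbd _ (hWmem n j)
    rw [hAdef, abs_sub_le_iff]
    constructor <;> linarith [h1.1, h1.2, hVc.1, hVc.2]
  have hBM : ∀ k : ℕ, |V (W n (j + (k:ℤ))) - V c| ≤ M := by
    intro k
    have h1 := hVbd _ (hWmem n (j + (k:ℤ)))
    rw [abs_sub_le_iff]
    constructor <;> linarith [h1.1, h1.2, hVc.1, hVc.2]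
  have hΔle1 : ∀ k : ℕ, |W n (j + (k:ℤ)) - W n j| ≤ 1 := by
    intro k
    have h1 := hWmem n (j + (k:ℤ)); have h2 := hWmem n j
    rw [abs_sub_le_iff]
    constructor <;> linarith [h1.1, h1.2, h2.1, h2.2]
  set u : ℕ → ℝ := fun k => γ k * ρ n (j + (k:ℤ) - 1) * |V (W n (j + (k:ℤ))) - V c| with hu
  set v : ℕ → ℝ := fun k => γ k * ρ n (j + (k:ℤ) - 1) * A with hv
  have hidx : ∀ k : ℕ, j + (k:ℤ) - 1 = (j-1) + (k:ℤ) := fun k => by ring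
  have hsu : Summable u :=
    Summable.of_nonneg_of_le
      (fun k => mul_nonneg (mul_nonneg (hγnn k) (hρmem n _).1) (abs_nonneg _))
      (fun k => by
        have := hρmem n (j + (k:ℤ) - 1)
        calc γ k * ρ n (j + (k:ℤ) - 1) * |V (W n (j + (k:ℤ))) - V c|
            ≤ γ k * 1 * M := by
              apply mul_le_mul (by nlinarith [hγnn k, this.1, this.2]) (hBM k) (abs_nonneg _)
                (by nlinarith [hγnn k])
          _ = γ k * M := by ring)
      (hsγ.mul_right M)
  have hsv : Summable v :=
    Summable.of_nonneg_of_le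
      (fun k => mul_nonneg (mul_nonneg (hγnn k) (hρmem n _).1) hA0)
      (fun k => by
        have := hρmem n (j + (k:ℤ) - 1)
        calc γ k * ρ n (j + (k:ℤ) - 1) * A ≤ γ k * 1 * M := by
              apply mul_le_mul (by nlinarith [hγnn k, this.1, this.2]) hAM hA0
                (by nlinarith [hγnn k])
          _ = γ k * M := by ring)
      (hsγ.mul_right M)
  -- tsum v = W n (j-1) * A
  have hvsum : ∑' k, v k = W n (j-1) * A := by
    have : ∀ k : ℕ, v k = (γ k * ρ n ((j-1) + (k:ℤ))) * A := by
      intro k; rw [hv]; simp only []; rw [hidx k]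
    rw [tsum_congr this, tsum_mul_right, ← hW]
  -- tsum of w = W n j * A
  have hwsum : ∑' k : ℕ, (γ k * ρ n (j + (k:ℤ))) * A = W n j * A := by
    rw [tsum_mul_right, ← hW]
  have hsw : Summable (fun k : ℕ => (γ k * ρ n (j + (k:ℤ))) * A) := (hsum n j).mul_right A
  -- the T1 term
  set S : ℝ := ∑' k : ℕ, γ k * |W n (j + (k:ℤ)) - W n j| with hS
  have hsLS : Summable (fun k : ℕ => L * (γ k * |W n (j + (k:ℤ)) - W n j|)) :=
    Summable.of_nonneg_of_le
      (fun k => mul_nonneg hL (mul_nonneg (hγnn k) (abs_nonneg _)))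
      (fun k => mul_le_mul_of_nonneg_left (mul_le_of_le_one_right (hγnn k) (hΔle1 k)) hL)
      (hsγ.mul_left L)
  have hpt : ∀ k : ℕ, |u k - v k| ≤ L * (γ k * |W n (j + (k:ℤ)) - W n j|) := by
    intro k
    have hρk := hρmem n (j + (k:ℤ) - 1)
    have h1 : u k - v k = γ k * ρ n (j + (k:ℤ) - 1)
        * (|V (W n (j + (k:ℤ))) - V c| - A) := by rw [hu, hv]; ring
    rw [h1, abs_mul, abs_of_nonneg (mul_nonneg (hγnn k) hρk.1)]
    have h2 : |(|V (W n (j + (k:ℤ))) - V c| - A)| ≤ L * |W n (j + (k:ℤ)) - W n j| := by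
      refine (abs_abs_sub_abs_le_abs_sub _ _).trans ?_
      rw [sub_sub_sub_cancel_right]
      exact hVlip _ _
    calc γ k * ρ n (j + (k:ℤ) - 1) * |(|V (W n (j + (k:ℤ))) - V c| - A)|
        ≤ γ k * 1 * (L * |W n (j + (k:ℤ)) - W n j|) := by
          apply mul_le_mul (by nlinarith [hγnn k, hρk.1, hρk.2]) h2 (abs_nonneg _)
            (by nlinarith [hγnn k])
      _ = L * (γ k * |W n (j + (k:ℤ)) - W n j|) := by ring
  have hsuv : Summable (fun k => u k - v k) := hsu.sub hsv
  have hsabs : Summable (fun k => |u k - v k|) :=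
    Summable.of_nonneg_of_le (fun k => abs_nonneg _) hpt hsLS
  have hsabs' : Summable (fun k => ‖u k - v k‖) := by simpa [Real.norm_eq_abs] using hsabs
  have hT1 : |∑' k, (u k - v k)| ≤ L * S := by
    calc |∑' k, (u k - v k)| = ‖∑' k, (u k - v k)‖ := (Real.norm_eq_abs _).symm
      _ ≤ ∑' k, ‖u k - v k‖ := norm_tsum_le_tsum_norm hsabs'
      _ = ∑' k, |u k - v k| := by simp [Real.norm_eq_abs]
      _ ≤ ∑' k, L * (γ k * |W n (j + (k:ℤ)) - W n j|) := Summable.tsum_le_tsum hpt hsabs hsLS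
      _ = L * S := by rw [hS, tsum_mul_left]
  -- decomposition
  have husum : ∑' k, u k = (∑' k, (u k - v k)) + W n (j-1) * A := by
    rw [Summable.tsum_sub hsu hsv, hvsum]; ring
  have hdec : Ψ c n j - ψ c (W n j)
      = (|W n (j-1) - c| - |W n j - c|) * V c
        - (∑' k, (u k - v k)) - (W n (j-1) - W n j) * A := by
    rw [hΨ c n j, hψ c (W n j),
      show (∑' k : ℕ, γ k * ρ n (j + (k:ℤ) - 1) * |V (W n (j + (k:ℤ))) - V c|)
          = ∑' k, u k from by rw [hu],
      show |V (W n j) - V c| = A from hAdef.symm, husum]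
    ring
  have hD1 : |(|W n (j-1) - c| - |W n j - c|)| ≤ |W n j - W n (j-1)| := by
    refine (abs_abs_sub_abs_le_abs_sub _ _).trans ?_
    rw [sub_sub_sub_cancel_right, abs_sub_comm]
  have hD2 : |W n (j-1) - W n j| = |W n j - W n (j-1)| := abs_sub_comm _ _
  rw [hdec]
  have habs : |(|W n (j-1) - c| - |W n j - c|) * V c - (∑' k, (u k - v k))
        - (W n (j-1) - W n j) * A|
      ≤ |(|W n (j-1) - c| - |W n j - c|)| * V c + |∑' k, (u k - v k)|
        + |W n (j-1) - W n j| * A := by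
    calc |(|W n (j-1) - c| - |W n j - c|) * V c - (∑' k, (u k - v k))
          - (W n (j-1) - W n j) * A|
        ≤ |(|W n (j-1) - c| - |W n j - c|) * V c - (∑' k, (u k - v k))|
          + |(W n (j-1) - W n j) * A| := abs_sub _ _
      _ ≤ |(|W n (j-1) - c| - |W n j - c|) * V c| + |∑' k, (u k - v k)|
          + |(W n (j-1) - W n j) * A| := by
            have := abs_sub ((|W n (j-1) - c| - |W n j - c|) * V c) (∑' k, (u k - v k))
            linarith
      _ = |(|W n (j-1) - c| - |W n j - c|)| * V c + |∑' k, (u k - v k)|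
          + |W n (j-1) - W n j| * A := by
            rw [abs_mul, abs_mul, abs_of_nonneg hVc.1, abs_of_nonneg hA0]
  refine habs.trans ?_
  rw [hD2]
  have hb1 : |(|W n (j-1) - c| - |W n j - c|)| * V c ≤ |W n j - W n (j-1)| * M :=
    mul_le_mul hD1 hVc.2 hVc.1 (abs_nonneg _)
  have hb2 : |W n j - W n (j-1)| * A ≤ |W n j - W n (j-1)| * M :=
    mul_le_mul_of_nonneg_left hAM (abs_nonneg _)
  have hSS : L * ∑' k : ℕ, γ k * |W n (j + (k:ℤ)) - W n j| = L * S := by rw [hS]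
  linarith [hT1]
end
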